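/- Let a, a', b be nonnegative integers with b <= a and b <= a', and define the falling factorial P(a,b) = a!/(a-b)!. If |a - a'| <= a' - b + 1 and a' - b + 1 > 0, then |P(a,b)/P(a',b) - 1| <= (2^b - 1) * |a - a'| / (a' - b + 1). -/

import Mathlib

/-!
Writing `P(a,b) / P(a',b) = ∏_{j<b} (1 + (a - a') / (a' - j))`, every factor differs from `1`
by at most `x = |a - a'| / (a' - b + 1)`, so the product differs from `1` by at most
`(1 + x)^b - 1`. The hypothesis says `x ≤ 1`, and on `[0, 1]` the convex function `(1 + x)^b`
lies below its chord `1 + (2^b - 1) x`.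
-/

open Finset

theorem Nat.cast_descFactorial_eq_prod_range {R : Type*} [CommRing R] (a b : ℕ) :
    (a.descFactorial b : R) = ∏ j ∈ range b, ((a : R) - j) := by
  rw [← descPochhammer_eval_eq_descFactorial, descPochhammer_eval_eq_prod_range]

section NormedCommRing

variable {ι R : Type*} [NormedCommRing R] [NormOneClass R]

theorem Finset.norm_prod_one_add_sub_one_le_prod (s : Finset ι) (f : ι → R) :
    ‖∏ i ∈ s, (1 + f i) - 1‖ ≤ ∏ i ∈ s, (1 + ‖f i‖) - 1 := by
  classical
  induction s using Finset.induction_on with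
  | empty => simp
  | insert i s hi ih =>
    have hprod : ‖∏ j ∈ s, (1 + f j)‖ ≤ ∏ j ∈ s, (1 + ‖f j‖) := by
      linarith [norm_le_norm_sub_add (∏ j ∈ s, (1 + f j)) 1, norm_one (α := R)]
    rw [prod_insert hi, prod_insert hi,
      show (1 + f i) * ∏ j ∈ s, (1 + f j) - 1 =
        (∏ j ∈ s, (1 + f j) - 1) + f i * ∏ j ∈ s, (1 + f j) by ring]
    calc ‖(∏ j ∈ s, (1 + f j) - 1) + f i * ∏ j ∈ s, (1 + f j)‖
        ≤ (∏ j ∈ s, (1 + ‖f j‖) - 1) + ‖f i‖ * ∏ j ∈ s, (1 + ‖f j‖) :=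
          norm_add_le_of_le ih ((norm_mul_le _ _).trans (by gcongr))
      _ = (1 + ‖f i‖) * ∏ j ∈ s, (1 + ‖f j‖) - 1 := by ring

theorem Finset.norm_prod_one_add_sub_one_le_pow (s : Finset ι) (f : ι → R) {x : ℝ}
    (hf : ∀ i ∈ s, ‖f i‖ ≤ x) : ‖∏ i ∈ s, (1 + f i) - 1‖ ≤ (1 + x) ^ #s - 1 := by
  grw [s.norm_prod_one_add_sub_one_le_prod f, ← prod_const]
  gcongr with i hi
  exact hf i hi

end NormedCommRing

theorem one_add_pow_sub_one_le {x : ℝ} (hx₀ : 0 ≤ x) (hx₁ : x ≤ 1) (n : ℕ) :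
    (1 + x) ^ n - 1 ≤ (2 ^ n - 1) * x := by
  have := (convexOn_pow n).2 (Set.mem_Ici.2 zero_le_one) (Set.mem_Ici.2 zero_le_two)
    (sub_nonneg.2 hx₁) hx₀ (sub_add_cancel 1 x)
  simp only [smul_eq_mul, one_pow, mul_one, show 1 - x + x * 2 = 1 + x by ring] at this
  linarith

theorem stmt_6_general (a a' b : ℕ) (hba' : b ≤ a')
    (hclose : |(a : ℝ) - a'| ≤ (a' : ℝ) - b + 1) :
    |((a.descFactorial b : ℕ) : ℝ) / ((a'.descFactorial b : ℕ) : ℝ) - 1| ≤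
      (2 ^ b - 1) * |(a : ℝ) - a'| / ((a' : ℝ) - b + 1) := by
  have hD : (0 : ℝ) < a' - b + 1 := by linarith [(Nat.cast_le (α := ℝ)).2 hba']
  have hgap : ∀ j ∈ range b, (a' : ℝ) - b + 1 ≤ a' - j := fun j hj => by
    have : (j : ℝ) + 1 ≤ b := by exact_mod_cast mem_range.1 hj
    linarith
  have hratio : ((a.descFactorial b : ℕ) : ℝ) / ((a'.descFactorial b : ℕ) : ℝ) =
      ∏ j ∈ range b, (1 + ((a : ℝ) - a') / (a' - j)) := by
    rw [Nat.cast_descFactorial_eq_prod_range, Nat.cast_descFactorial_eq_prod_range,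
      ← prod_div_distrib]
    refine prod_congr rfl fun j hj => ?_
    field_simp [(hD.trans_le (hgap j hj)).ne']
    ring
  set x := |(a : ℝ) - a'| / (a' - b + 1)
  have hfactor : ∀ j ∈ range b, ‖((a : ℝ) - a') / (a' - j)‖ ≤ x := fun j hj => by
    rw [Real.norm_eq_abs, abs_div, abs_of_pos (hD.trans_le (hgap j hj))]
    exact div_le_div_of_nonneg_left (abs_nonneg _) hD (hgap j hj)
  calc |((a.descFactorial b : ℕ) : ℝ) / ((a'.descFactorial b : ℕ) : ℝ) - 1|
      ≤ (1 + x) ^ b - 1 := by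
        simpa [hratio] using (range b).norm_prod_one_add_sub_one_le_pow _ hfactor
    _ ≤ (2 ^ b - 1) * x :=
        one_add_pow_sub_one_le (by positivity) ((div_le_one hD).2 hclose) b
    _ = (2 ^ b - 1) * |(a : ℝ) - a'| / (a' - b + 1) := by ring

theorem stmt_6 (a a' b : ℕ) (hba : b ≤ a) (hba' : b ≤ a')
    (hclose : |(a : ℝ) - a'| ≤ (a' : ℝ) - b + 1) :
    |((a.descFactorial b : ℕ) : ℝ) / ((a'.descFactorial b : ℕ) : ℝ) - 1| ≤
      (2 ^ b - 1) * |(a : ℝ) - a'| / ((a' : ℝ) - b + 1) :=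
  stmt_6_general a a' b hba' hclose
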